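/- arXiv:2411.06564 — 2 statements merged into one kernel-verified Lean document; each statement's English description precedes it below -/
import Mathlib

section
/- Fix w ∈ ℂ^N, an N×N Hermitian matrix R̂, and k > 0. The function f(R) = w^H R w - k · Tr((R - R̂)^H (R - R̂)) over N×N complex matrices R attains its global maximum at R* = R̂ + (1/(2k)) w w^H, and the maximum value equals w^H R̂ w + (1/(4k)) (w^H w)². -/
open Matrix
open scoped ComplexOrder

/-- Quadratic form `wᴴ R w` (real part). -/
noncomputable def qf {N : ℕ} (R : Matrix (Fin N) (Fin N) ℂ) (w : Fin N → ℂ) : ℝ :=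
  (star w ⬝ᵥ R.mulVec w).re

/-! Complete the square in the real Frobenius inner product `⟪A, B⟫ = Re tr (Aᴴ B)`. With
`W = w wᴴ` one has `wᴴ R w = ⟪W, R⟫` and `⟪W, W⟫ = (wᴴ w)²`, so
`f R = f R* - k ‖R - R*‖²` where `R* = R̂ + W / (2k)`. -/

namespace Matrix

theorem trace_vecMulVec_mul {α m n : Type*} [CommSemiring α] [Fintype m] [Fintype n]
    (u : n → α) (v : m → α) (M : Matrix m n α) :
    (vecMulVec u v * M).trace = v ⬝ᵥ M *ᵥ u := by
  rw [vecMulVec_mul, trace_vecMulVec, dotProduct_comm, dotProduct_mulVec]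

variable {𝕜 m n : Type*} [RCLike 𝕜] [Fintype m] [Fintype n]

theorem re_trace_conjTranspose_mul_comm (A B : Matrix m n 𝕜) :
    RCLike.re (Aᴴ * B).trace = RCLike.re (Bᴴ * A).trace := by
  rw [← RCLike.conj_re, ← RCLike.star_def, ← trace_conjTranspose, conjTranspose_mul,
    conjTranspose_conjTranspose]

theorem re_trace_conjTranspose_mul_self_nonneg (A : Matrix m n 𝕜) :
    0 ≤ RCLike.re (Aᴴ * A).trace :=
  (RCLike.nonneg_iff.mp (posSemidef_conjTranspose_mul_self A).trace_nonneg).1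

theorem re_trace_conjTranspose_mul_sub_complete_square {k : ℝ} (hk : k ≠ 0) (A X : Matrix m n 𝕜) :
    RCLike.re (Aᴴ * X).trace - k * RCLike.re (Xᴴ * X).trace =
      RCLike.re (Aᴴ * A).trace / (4 * k) -
        k * RCLike.re ((X - (2 * k)⁻¹ • A)ᴴ * (X - (2 * k)⁻¹ • A)).trace := by
  simp only [conjTranspose_sub, conjTranspose_smul, star_trivial, Matrix.sub_mul, Matrix.mul_sub,
    Matrix.smul_mul, Matrix.mul_smul, trace_sub, trace_smul, map_sub, RCLike.smul_re]
  rw [re_trace_conjTranspose_mul_comm X A]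
  field_simp
  ring

theorem re_trace_conjTranspose_mul_vecMulVec_star (w : n → 𝕜) :
    RCLike.re ((vecMulVec w (star w))ᴴ * vecMulVec w (star w)).trace =
      RCLike.re (star w ⬝ᵥ w) ^ 2 := by
  obtain ⟨-, him⟩ := RCLike.nonneg_iff.mp (dotProduct_star_self_nonneg w)
  rw [conjTranspose_vecMulVec, star_star, trace_vecMulVec_mul, vecMulVec_mulVec, op_smul_eq_smul,
    dotProduct_smul, smul_eq_mul, sq, RCLike.mul_re, him, mul_zero, sub_zero]

end Matrix

theorem qf_eq_re_trace {N : ℕ} (R : Matrix (Fin N) (Fin N) ℂ) (w : Fin N → ℂ) :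
    qf R w = ((vecMulVec w (star w))ᴴ * R).trace.re := by
  rw [conjTranspose_vecMulVec, star_star, trace_vecMulVec_mul, qf]

theorem qf_sub_mul_re_trace_sub_eq {N : ℕ} (w : Fin N → ℂ) (Rh R : Matrix (Fin N) (Fin N) ℂ)
    {k : ℝ} (hk : k ≠ 0) :
    qf R w - k * ((R - Rh)ᴴ * (R - Rh)).trace.re =
      qf Rh w + 1 / (4 * k) * qf 1 w ^ 2 -
        k * ((R - (Rh + (1 / (2 * k)) • vecMulVec w (star w)))ᴴ *
          (R - (Rh + (1 / (2 * k)) • vecMulVec w (star w)))).trace.re := by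
  set W := vecMulVec w (star w)
  have hqf : qf R w - qf Rh w = (Wᴴ * (R - Rh)).trace.re := by
    rw [qf_eq_re_trace, qf_eq_re_trace, Matrix.mul_sub, trace_sub, Complex.sub_re]
  have hW : (Wᴴ * W).trace.re = qf 1 w ^ 2 := by
    rw [← RCLike.re_to_complex, re_trace_conjTranspose_mul_vecMulVec_star, qf, one_mulVec]; rfl
  have hsq := re_trace_conjTranspose_mul_sub_complete_square hk W (R - Rh)
  rw [sub_sub, ← one_div] at hsq
  simp only [RCLike.re_to_complex] at hsq
  rw [← hW, one_div_mul_eq_div]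
  linarith

theorem stmt5_general {N : ℕ} (w : Fin N → ℂ) (Rh : Matrix (Fin N) (Fin N) ℂ)
    (k : ℝ) (hk : 0 < k)
    (f : Matrix (Fin N) (Fin N) ℂ → ℝ)
    (hf : f = fun R => qf R w - k * ((R - Rh)ᴴ * (R - Rh)).trace.re)
    (Rstar : Matrix (Fin N) (Fin N) ℂ)
    (hRstar : Rstar = Rh + (1 / (2 * k)) • vecMulVec w (star w)) :
    (∀ R : Matrix (Fin N) (Fin N) ℂ, f R ≤ f Rstar) ∧
    f Rstar = qf Rh w + (1 / (4 * k)) * (qf (1 : Matrix (Fin N) (Fin N) ℂ) w) ^ 2 := by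
  have hfR (R) : f R = qf Rh w + 1 / (4 * k) * qf 1 w ^ 2 -
      k * ((R - Rstar)ᴴ * (R - Rstar)).trace.re := by
    rw [hf, hRstar]
    exact qf_sub_mul_re_trace_sub_eq w Rh R hk.ne'
  have hfRstar : f Rstar = qf Rh w + 1 / (4 * k) * qf 1 w ^ 2 := by
    simpa using hfR Rstar
  refine ⟨fun R => ?_, hfRstar⟩
  rw [hfR, hfRstar, sub_le_self_iff]
  exact mul_nonneg hk.le (re_trace_conjTranspose_mul_self_nonneg (R - Rstar))

theorem stmt5 {N : ℕ} (w : Fin N → ℂ) (Rh : Matrix (Fin N) (Fin N) ℂ)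
    (hRh : Rh.IsHermitian) (k : ℝ) (hk : 0 < k)
    (f : Matrix (Fin N) (Fin N) ℂ → ℝ)
    (hf : f = fun R => qf R w - k * ((R - Rh)ᴴ * (R - Rh)).trace.re)
    (Rstar : Matrix (Fin N) (Fin N) ℂ)
    (hRstar : Rstar = Rh + (1 / (2 * k)) • vecMulVec w (star w)) :
    (∀ R : Matrix (Fin N) (Fin N) ℂ, f R ≤ f Rstar) ∧
    f Rstar = qf Rh w + (1 / (4 * k)) * (qf (1 : Matrix (Fin N) (Fin N) ℂ) w) ^ 2 :=
  stmt5_general w Rh k hk f hf Rstar hRstar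
end

section
/- Fix a nonzero w ∈ ℂ^N, an N×N Hermitian matrix R̂, and k > 0. The function f(R) = w^H R w - k · (w^H w) · Tr((R - R̂)^H (R - R̂)) over N×N complex matrices R attains its global maximum at R* = R̂ + w w^H / (2k w^H w), and the maximum value equals w^H R̂ w + (1/(4k)) w^H w. -/
open Matrix
open scoped ComplexOrder

section aux
variable {N : ℕ} (w : Fin N → ℂ)

lemma qf_one : qf (1 : Matrix (Fin N) (Fin N) ℂ) w = (star w ⬝ᵥ w).re := by
  simp [qf]

lemma dot_self_eq : star w ⬝ᵥ w = ((qf (1 : Matrix (Fin N) (Fin N) ℂ) w : ℝ) : ℂ) := by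
  rw [qf_one]
  apply Complex.ext
  · simp
  · simp only [Complex.ofReal_im, dotProduct, Complex.im_sum, Pi.star_apply]
    apply Finset.sum_eq_zero
    intro i _
    simp only [Complex.mul_im, Complex.star_def, Complex.conj_re, Complex.conj_im]
    ring

lemma qf_one_pos (hw : w ≠ 0) : 0 < qf (1 : Matrix (Fin N) (Fin N) ℂ) w := by
  rw [qf_one]
  have h : (star w ⬝ᵥ w).re = ∑ i, Complex.normSq (w i) := by
    simp [dotProduct, Complex.re_sum, Complex.normSq_apply, Complex.mul_re]
  rw [h]
  obtain ⟨i, hi⟩ : ∃ i, w i ≠ 0 := by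
    by_contra h; push_neg at h; exact hw (funext h)
  exact Finset.sum_pos' (fun j _ => Complex.normSq_nonneg _)
    ⟨i, Finset.mem_univ i, Complex.normSq_pos.mpr hi⟩

lemma tr_key (Δ : Matrix (Fin N) (Fin N) ℂ) :
    ((vecMulVec w (star w))ᴴ * Δ).trace = star w ⬝ᵥ Δ.mulVec w := by
  simp only [Matrix.trace, Matrix.diag_apply, Matrix.mul_apply, conjTranspose_apply,
    vecMulVec_apply, dotProduct, mulVec, Pi.star_apply, star_mul', star_star,
    Finset.mul_sum]
  rw [Finset.sum_comm]
  exact Finset.sum_congr rfl fun j _ => Finset.sum_congr rfl fun i _ => by ring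

lemma vmv_herm : (vecMulVec w (star w))ᴴ = vecMulVec w (star w) := by
  ext i j
  simp [conjTranspose_apply, vecMulVec_apply, mul_comm]

lemma tr_nonneg (Δ : Matrix (Fin N) (Fin N) ℂ) : 0 ≤ (Δᴴ * Δ).trace.re := by
  have h : (Δᴴ * Δ).trace.re = ∑ i, ∑ j, Complex.normSq (Δ j i) := by
    simp [Matrix.trace, Matrix.diag_apply, Matrix.mul_apply, conjTranspose_apply,
      Complex.re_sum, Complex.normSq_apply, Complex.mul_re]
  rw [h]
  exact Finset.sum_nonneg fun i _ => Finset.sum_nonneg fun j _ => Complex.normSq_nonneg _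

lemma qf_add (R S : Matrix (Fin N) (Fin N) ℂ) : qf (R + S) w = qf R w + qf S w := by
  simp [qf, add_mulVec, dotProduct_add]

lemma qf_smul (t : ℝ) (R : Matrix (Fin N) (Fin N) ℂ) : qf (t • R) w = t * qf R w := by
  simp [qf, smul_mulVec, dotProduct_smul, Complex.real_smul]

lemma A_mulVec : (vecMulVec w (star w)).mulVec w = (star w ⬝ᵥ w) • w := by
  ext j
  simp only [mulVec, vecMulVec_apply, dotProduct, Pi.smul_apply, smul_eq_mul,
    Finset.sum_mul]
  exact Finset.sum_congr rfl fun i _ => by ring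

lemma tr_expand (X Y : Matrix (Fin N) (Fin N) ℂ) :
    ((X + Y)ᴴ * (X + Y)).trace.re
      = (Xᴴ * X).trace.re + (Yᴴ * Y).trace.re + 2 * (Xᴴ * Y).trace.re := by
  have hYX : (Yᴴ * X).trace = star ((Xᴴ * Y).trace) := by
    rw [← Matrix.trace_conjTranspose, conjTranspose_mul, conjTranspose_conjTranspose]
  have hre : (Yᴴ * X).trace.re = (Xᴴ * Y).trace.re := by
    rw [hYX]; simp
  have hexp : (X + Y)ᴴ * (X + Y) = Xᴴ * X + Yᴴ * Y + (Xᴴ * Y + Yᴴ * X) := by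
    rw [conjTranspose_add]
    noncomm_ring
  rw [hexp]
  simp only [Matrix.trace_add, Complex.add_re]
  rw [hre]; ring

end aux

theorem stmt6 {N : ℕ} (w : Fin N → ℂ) (hw : w ≠ 0) (Rh : Matrix (Fin N) (Fin N) ℂ)
    (hRh : Rh.IsHermitian) (k : ℝ) (hk : 0 < k)
    (f : Matrix (Fin N) (Fin N) ℂ → ℝ)
    (hf : f = fun R => qf R w
      - k * qf (1 : Matrix (Fin N) (Fin N) ℂ) w * ((R - Rh)ᴴ * (R - Rh)).trace.re)
    (Rstar : Matrix (Fin N) (Fin N) ℂ)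
    (hRstar : Rstar = Rh
      + (1 / (2 * k * qf (1 : Matrix (Fin N) (Fin N) ℂ) w)) • vecMulVec w (star w)) :
    (∀ R : Matrix (Fin N) (Fin N) ℂ, f R ≤ f Rstar) ∧
    f Rstar = qf Rh w + (1 / (4 * k)) * qf (1 : Matrix (Fin N) (Fin N) ℂ) w := by
  set c := qf (1 : Matrix (Fin N) (Fin N) ℂ) w with hc
  have hcpos : 0 < c := qf_one_pos w hw
  set A := vecMulVec w (star w) with hA
  set t : ℝ := 1 / (2 * k * c) with ht
  have hAH : Aᴴ = A := vmv_herm w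
  have htA : (t • A : Matrix (Fin N) (Fin N) ℂ)ᴴ = t • A := by
    rw [Matrix.conjTranspose_smul, hAH, star_trivial]
  have hre_smul : ∀ (r : ℝ) (z : ℂ), ((r : ℝ) • z).re = r * z.re := by
    intro r z; simp [Complex.real_smul]
  have htrAA : (Aᴴ * A).trace.re = c * c := by
    rw [hA, tr_key, A_mulVec, dotProduct_smul, dot_self_eq]
    simp [← Complex.ofReal_mul, smul_eq_mul, ← hc]
  have hqfA : qf A w = c * c := by
    rw [qf, hA, A_mulVec, dotProduct_smul, dot_self_eq]
    simp [← Complex.ofReal_mul, smul_eq_mul, ← hc]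
  have htrtA : ((t • A : Matrix (Fin N) (Fin N) ℂ)ᴴ * (t • A)).trace.re
      = t * t * (c * c) := by
    rw [Matrix.conjTranspose_smul, star_trivial, Matrix.smul_mul, Matrix.mul_smul,
      smul_smul, Matrix.trace_smul, hre_smul, htrAA]
  have hkc : (2 : ℝ) * k * c ≠ 0 := by positivity
  have hsub2 : Rstar - Rh = t • A := by rw [hRstar]; abel
  have hval : f Rstar = qf Rh w + 1 / (4 * k) * c := by
    simp only [hf]
    rw [hsub2, hRstar, qf_add, qf_smul, hqfA, htrtA, ht]
    field_simp
    ring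
  have hcross : ∀ Δ : Matrix (Fin N) (Fin N) ℂ,
      (Δᴴ * (t • A)).trace.re = t * qf Δ w := by
    intro Δ
    have h1 : (Δᴴ * A).trace = star ((Aᴴ * Δ).trace) := by
      rw [← Matrix.trace_conjTranspose, conjTranspose_mul,
        conjTranspose_conjTranspose]
    rw [Matrix.mul_smul, Matrix.trace_smul, hre_smul, h1, hA, tr_key]
    simp [qf]
  refine ⟨?_, hval⟩
  intro R
  have hR : R = Rstar + (R - Rstar) := by abel
  set Δ := R - Rstar with hΔ
  have hsub : R - Rh = Δ + t • A := by rw [hΔ, hRstar]; abel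
  have hnn : 0 ≤ (Δᴴ * Δ).trace.re := tr_nonneg Δ
  simp only [hf]
  rw [hsub, hsub2, tr_expand, hcross Δ, htrtA]
  have hqfR : qf R w = qf Rstar w + qf Δ w := by
    conv_lhs => rw [hR]
    rw [qf_add]
  rw [hqfR]
  have h3 : 2 * (t * qf Δ w) * (k * c) = qf Δ w := by
    rw [ht]; field_simp
  nlinarith [mul_nonneg (mul_nonneg hk.le hcpos.le) hnn, h3]
end
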